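/- Let n ≥ 4 and 4 ≤ k ≤ 2n − 1 be integers. Then the P_k-structure connectivity of the BCDC network satisfies κ(B_n; P_k) ≤ (2n−2)/k if 4 ≤ k ≤ n − 1 and k divides n − 1, and κ(B_n; P_k) ≤ ⌈(2n−1)/k⌉ otherwise. -/

import Mathlib

open SimpleGraph

/-! ## Structure connectivity -/

/-- The set of vertices covered by a family of subgraphs of `G`. -/
def SimpleGraph.cutVerts {V : Type*} {G : SimpleGraph V} (F : Finset G.Subgraph) : Set V :=
  ⋃ A ∈ F, A.verts

/-- A family `F` of subgraphs of `G` is a subgraph cut if deleting all vertices of members of `F`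
leaves a graph that is disconnected or has at most one vertex. -/
def SimpleGraph.IsSubgraphCut {V : Type*} (G : SimpleGraph V) (F : Finset G.Subgraph) : Prop :=
  ¬ (G.induce (SimpleGraph.cutVerts F)ᶜ).Connected ∨ ((SimpleGraph.cutVerts F)ᶜ : Set V).Subsingleton

/-- An `H`-structure cut of `G`: a subgraph cut all of whose members are isomorphic to `H`. -/
def SimpleGraph.IsStructureCut {V W : Type*} (G : SimpleGraph V) (H : SimpleGraph W)
    (F : Finset G.Subgraph) : Prop :=
  G.IsSubgraphCut F ∧ ∀ A ∈ F, Nonempty (A.coe ≃g H)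

/-- An `H`-substructure cut of `G`: a subgraph cut all of whose members are isomorphic to a
connected subgraph of `H`. -/
def SimpleGraph.IsSubstructureCut {V W : Type*} (G : SimpleGraph V) (H : SimpleGraph W)
    (F : Finset G.Subgraph) : Prop :=
  G.IsSubgraphCut F ∧ ∀ A ∈ F, ∃ K : H.Subgraph, K.Connected ∧ Nonempty (A.coe ≃g K.coe)

/-- The `H`-structure connectivity `κ(G; H)`. -/
noncomputable def SimpleGraph.structConn {V W : Type*} (G : SimpleGraph V) (H : SimpleGraph W) : ℕ :=
  sInf {k | ∃ F : Finset G.Subgraph, G.IsStructureCut H F ∧ F.card = k}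

/-- The `H`-substructure connectivity `κˢ(G; H)`. -/
noncomputable def SimpleGraph.substructConn {V W : Type*} (G : SimpleGraph V) (H : SimpleGraph W) : ℕ :=
  sInf {k | ∃ F : Finset G.Subgraph, G.IsSubstructureCut H F ∧ F.card = k}

/-- The star `K_{1,t}` with center `0` and `t` leaves. -/
def starGraph (t : ℕ) : SimpleGraph (Fin (t + 1)) :=
  SimpleGraph.fromRel (fun i _ => i = 0)
/-! ## The crossed cube and the BCDC network -/

/-- Binary strings of length `n` (`CQVertex (n+1) = Bool × CQVertex n`,
the first component being the leading bit `x_n`). -/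
def CQVertex : ℕ → Type
  | 0 => Unit
  | n + 1 => Bool × CQVertex n

/-- The `i`-th bit `x_i` of a binary string `x = x_{n-1} … x_1 x_0`. -/
def CQbit : (n : ℕ) → CQVertex n → ℕ → Bool
  | 0, _, _ => false
  | n + 1, x, i => if i = n then x.1 else CQbit n x.2 i

/-- Two binary strings `x = x_1 x_0` and `y = y_1 y_0` are pair related iff
`(x, y) ∈ {(00,00), (10,10), (01,11), (11,01)}`. -/
def pairRel (x1 x0 y1 y0 : Bool) : Prop :=
  (x0 = false ∧ y0 = false ∧ y1 = x1) ∨ (x0 = true ∧ y0 = true ∧ y1 = !x1)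

/-- The adjacency relation of the `n`-dimensional crossed cube: `CQ_1 = K_2`, and
`u = 0u_{n-2}…u_0`, `v = 1v_{n-2}…v_0` are adjacent in `CQ_n` iff (i) `u_{n-2} = v_{n-2}`
whenever `n` is even, and (ii) `u_{2i+1}u_{2i} ∼ v_{2i+1}v_{2i}` for all `0 ≤ i < ⌊(n-1)/2⌋`. -/
def CQrel : (n : ℕ) → CQVertex n → CQVertex n → Prop
  | 0, _, _ => False
  | n + 1, u, v =>
      (u.1 = v.1 ∧ CQrel n u.2 v.2) ∨
      (u.1 ≠ v.1 ∧
        ((n + 1) % 2 = 0 → CQbit n u.2 (n - 1) = CQbit n v.2 (n - 1)) ∧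
        ∀ i < n / 2, pairRel (CQbit n u.2 (2 * i + 1)) (CQbit n u.2 (2 * i))
          (CQbit n v.2 (2 * i + 1)) (CQbit n v.2 (2 * i)))

/-- The `n`-dimensional crossed cube `CQ_n`. -/
def crossedCube (n : ℕ) : SimpleGraph (CQVertex n) :=
  SimpleGraph.fromRel (CQrel n)

/-- The `n`-dimensional BCDC network `B_n`: the line graph of the crossed cube `CQ_n`. -/
def BCDC (n : ℕ) : SimpleGraph (crossedCube n).edgeSet :=
  (crossedCube n).lineGraph


/-!
The edge `e = 0^n ∼ 10^{n-1}` of `CQ_n` has exactly `2n - 2` neighbours in `B_n`: the edges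
`0^n ∼ 0e_j` and `10^{n-1} ∼ 1e_j` for `j < n - 1`, where `e_j` is the `j`-th unit string of length
`n - 1`. Together with the edge `0e_{n-2} ∼ 1e_{n-2}` joining the two stars they form a path on
`2n - 1` vertices of `B_n`. Cutting this path into consecutive pieces on `k` vertices covers it
with `⌈(2n-1)/k⌉` copies of `P_k`; when `k ∣ n - 1` the two stars alone are covered by
`2(n-1)/k` copies. Deleting such a family isolates `e` while the edge `0e_1 ∼ 1e_1` survives.
-/

namespace SimpleGraph

variable {V W : Type*} {G : SimpleGraph V} {H : SimpleGraph W}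

lemma not_connected_induce_compl_of_neighborSet_subset {s : Set V} {e f : V} (hef : e ≠ f)
    (he : e ∉ s) (hf : f ∉ s) (hnbr : G.neighborSet e ⊆ s) : ¬ (G.induce sᶜ).Connected := by
  intro hconn
  obtain ⟨p⟩ := hconn.preconnected ⟨e, he⟩ ⟨f, hf⟩
  have hsnd := p.adj_snd (Walk.not_nil_of_ne fun h => hef (congrArg Subtype.val h))
  exact p.snd.property (hnbr (by simpa using hsnd))

lemma structConn_le_card_of_neighborSet_subset {ι : Type*} [Fintype ι] (c : ι → Copy H G)
    {e f : V} (hef : e ≠ f) (he : ∀ t, e ∉ Set.range (c t)) (hf : ∀ t, f ∉ Set.range (c t))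
    (hnbr : G.neighborSet e ⊆ ⋃ t, Set.range (c t)) :
    G.structConn H ≤ Fintype.card ι := by
  classical
  set F := Finset.univ.image fun t => (c t).toSubgraph
  have hverts : cutVerts F = ⋃ t, Set.range (c t) := by
    ext v
    simp [F, cutVerts]
  have hcut : G.IsStructureCut H F := by
    refine ⟨Or.inl ?_, ?_⟩
    · rw [hverts]
      exact not_connected_induce_compl_of_neighborSet_subset hef (by simpa using he)
        (by simpa using hf) hnbr
    · simp only [F, Finset.mem_image, Finset.mem_univ, true_and, forall_exists_index]
      rintro _ t rfl
      exact ⟨(c t).isoToSubgraph.symm⟩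
  calc G.structConn H ≤ F.card := Nat.sInf_le ⟨F, hcut, rfl⟩
    _ ≤ Fintype.card ι := Finset.card_image_le

def pathGraphWindow {k L : ℕ} (s : ℕ) (h : s + k ≤ L) : pathGraph k ↪g pathGraph L where
  toFun i := ⟨s + i, by omega⟩
  inj' i j hij := by ext; simpa using hij
  map_rel_iff' := by
    intro i j
    show (pathGraph L).Adj ⟨s + i, _⟩ ⟨s + j, _⟩ ↔ _
    simp only [pathGraph_adj]
    omega

def Copy.ofPathGraph {L : ℕ} (p : Fin L → V) (hp : Function.Injective p)
    (hadj : ∀ i j : Fin L, i.val + 1 = j.val → G.Adj (p i) (p j)) : Copy (pathGraph L) G :=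
  Hom.toCopy ⟨p, fun {i j} h => (pathGraph_adj.1 h).elim (hadj i j) fun h => (hadj j i h).symm⟩ hp

lemma Copy.range_comp_subset {U : Type*} {K : SimpleGraph U} (c : Copy K G) (d : Copy H K) :
    Set.range (c.comp d) ⊆ Set.range c := by
  rintro _ ⟨x, rfl⟩
  exact ⟨d x, rfl⟩

lemma Copy.mem_range_comp_pathGraphWindow {L k s : ℕ} (c : Copy (pathGraph L) G) (h : s + k ≤ L)
    {i : Fin L} (hs : s ≤ i) (hi : i < s + k) :
    c i ∈ Set.range (c.comp (pathGraphWindow s h).toCopy) :=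
  ⟨⟨i - s, by omega⟩, by simp [pathGraphWindow, Nat.add_sub_cancel' hs]⟩

/-- The windows `[t k, t k + k)`, the last one shifted back into `[0, L)`, cover `[0, L)`. -/
lemma exists_window_mem {i k L : ℕ} (hi : i < L) (hk : 0 < k) (hkL : k ≤ L) :
    ∃ t < L ⌈/⌉ k, min (t * k) (L - k) ≤ i ∧ i < min (t * k) (L - k) + k := by
  refine ⟨i / k, ?_, ?_⟩
  · rw [Nat.ceilDiv_eq_add_pred_div, show L + k - 1 = L - 1 + k by omega,
      Nat.add_div_right _ hk, Nat.lt_succ_iff]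
    exact Nat.div_le_div_right (by omega)
  · have h1 := Nat.div_add_mod i k
    have h2 := Nat.mod_lt i hk
    have h3 : k * (i / k) = i / k * k := Nat.mul_comm _ _
    omega

lemma Copy.exists_pathGraph_cover {L k : ℕ} (c : Copy (pathGraph L) G) (hk : 0 < k)
    (hkL : k ≤ L) :
    ∃ d : Fin (L ⌈/⌉ k) → Copy (pathGraph k) G,
      (∀ t, Set.range (d t) ⊆ Set.range c) ∧ ∀ i, ∃ t, c i ∈ Set.range (d t) := by
  refine ⟨fun t => c.comp (pathGraphWindow (min (t * k) (L - k)) (by omega)).toCopy,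
    fun t => c.range_comp_subset _, fun i => ?_⟩
  obtain ⟨t, ht, hs, hs'⟩ := exists_window_mem i.isLt hk hkL
  exact ⟨⟨t, ht⟩, c.mem_range_comp_pathGraphWindow _ hs hs'⟩

lemma Copy.exists_pathGraph_cover_of_ne_middle {N k : ℕ} (c : Copy (pathGraph (2 * N + 1)) G)
    (hk : 0 < k) (hkN : k ≤ N) :
    ∃ d : Fin (N ⌈/⌉ k) ⊕ Fin (N ⌈/⌉ k) → Copy (pathGraph k) G,
      (∀ t, Set.range (d t) ⊆ Set.range c) ∧
        ∀ i : Fin (2 * N + 1), i.val ≠ N → ∃ t, c i ∈ Set.range (d t) := by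
  have hlo : 0 + N ≤ 2 * N + 1 := by omega
  have hhi : N + 1 + N ≤ 2 * N + 1 := by omega
  obtain ⟨d₀, hsub₀, hcov₀⟩ :=
    (c.comp (pathGraphWindow 0 hlo).toCopy).exists_pathGraph_cover hk hkN
  obtain ⟨d₁, hsub₁, hcov₁⟩ :=
    (c.comp (pathGraphWindow (N + 1) hhi).toCopy).exists_pathGraph_cover hk hkN
  refine ⟨Sum.elim d₀ d₁, ?_, fun i hi => ?_⟩
  · rintro (t | t)
    exacts [(hsub₀ t).trans (c.range_comp_subset _), (hsub₁ t).trans (c.range_comp_subset _)]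
  · rcases Nat.lt_or_gt_of_ne hi with hi | hi
    · obtain ⟨j, hj⟩ :=
        c.mem_range_comp_pathGraphWindow hlo (Nat.zero_le _) (by omega : i.val < 0 + N)
      obtain ⟨t, ht⟩ := hcov₀ j
      exact ⟨.inl t, hj ▸ ht⟩
    · obtain ⟨j, hj⟩ :=
        c.mem_range_comp_pathGraphWindow hhi (by omega : N + 1 ≤ i.val) (by omega)
      obtain ⟨t, ht⟩ := hcov₁ j
      exact ⟨.inr t, hj ▸ ht⟩

end SimpleGraph

namespace CQVertex

variable {n : ℕ}

def cons (a : Bool) (x : CQVertex n) : CQVertex (n + 1) := (a, x)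

@[simp] lemma cons_inj {a b : Bool} {x y : CQVertex n} : cons a x = cons b y ↔ a = b ∧ x = y :=
  Prod.mk.injEq a x b y ▸ Iff.rfl

@[simp] lemma bit_cons (a : Bool) (x : CQVertex n) (i : ℕ) :
    CQbit (n + 1) (cons a x) i = if i = n then a else CQbit n x i :=
  rfl

def zero : (n : ℕ) → CQVertex n
  | 0 => ()
  | n + 1 => cons false (zero n)

def unit : (n : ℕ) → ℕ → CQVertex n
  | 0, _ => ()
  | n + 1, j => if j = n then cons true (zero n) else cons false (unit n j)

lemma unit_succ_self : unit (n + 1) n = cons true (zero n) := if_pos rfl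

lemma unit_succ_of_ne {j : ℕ} (h : j ≠ n) : unit (n + 1) j = cons false (unit n j) := if_neg h

@[simp] lemma bit_zero (n i : ℕ) : CQbit n (zero n) i = false := by
  induction n with
  | zero => rfl
  | succ n ih => simp [zero, ih]

lemma bit_unit {j : ℕ} (hj : j < n) (i : ℕ) : CQbit n (unit n j) i = decide (i = j) := by
  induction n with
  | zero => omega
  | succ n ih =>
    rcases eq_or_ne j n with rfl | hjn
    · by_cases hi : i = j <;> simp [unit_succ_self, hi]
    · by_cases hi : i = n
      · simp [unit_succ_of_ne hjn, hi, hjn.symm]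
      · simp [unit_succ_of_ne hjn, hi, ih (by omega)]

lemma ext_bit : ∀ {n : ℕ} {x y : CQVertex n}, (∀ i < n, CQbit n x i = CQbit n y i) → x = y
  | 0, _, _, _ => rfl
  | n + 1, (a, x), (b, y), h => by
    have hab : a = b := by simpa [CQbit] using h n (by omega)
    have hxy : x = y := ext_bit fun i hi => by simpa [CQbit, hi.ne] using h i (by omega)
    rw [hab, hxy]

@[simp] lemma unit_ne_zero {j : ℕ} (hj : j < n) : unit n j ≠ zero n := fun h => by
  simpa [bit_unit hj] using congrArg (CQbit n · j) h

@[simp] lemma unit_inj {i j : ℕ} (hi : i < n) (hj : j < n) : unit n i = unit n j ↔ i = j := by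
  refine ⟨fun h => ?_, fun h => h ▸ rfl⟩
  simpa [bit_unit hi, bit_unit hj] using congrArg (CQbit n · i) h

end CQVertex

open CQVertex

lemma pairRel_symm {x1 x0 y1 y0 : Bool} (h : pairRel x1 x0 y1 y0) : pairRel y1 y0 x1 x0 := by
  revert h
  cases x1 <;> cases x0 <;> cases y1 <;> cases y0 <;> simp [pairRel]

lemma pairRel_self_iff {x1 x0 : Bool} : pairRel x1 x0 x1 x0 ↔ x0 = false := by
  cases x1 <;> cases x0 <;> simp [pairRel]

lemma pairRel_false_false_iff {y1 y0 : Bool} :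
    pairRel false false y1 y0 ↔ y1 = false ∧ y0 = false := by
  cases y1 <;> cases y0 <;> simp [pairRel]

section CrossedCube

variable {n : ℕ}

def CQcross (n : ℕ) (x y : CQVertex n) : Prop :=
  ((n + 1) % 2 = 0 → CQbit n x (n - 1) = CQbit n y (n - 1)) ∧
    ∀ i < n / 2, pairRel (CQbit n x (2 * i + 1)) (CQbit n x (2 * i))
      (CQbit n y (2 * i + 1)) (CQbit n y (2 * i))

lemma CQrel_succ {a b : Bool} {x y : CQVertex n} :
    CQrel (n + 1) (cons a x) (cons b y) ↔ (a = b ∧ CQrel n x y) ∨ (a ≠ b ∧ CQcross n x y) :=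
  Iff.rfl

lemma CQcross_symm {x y : CQVertex n} (h : CQcross n x y) : CQcross n y x :=
  ⟨fun hn => (h.1 hn).symm, fun i hi => pairRel_symm (h.2 i hi)⟩

lemma CQcross_self {x : CQVertex n} (hx : ∀ i, 2 * i + 1 < n → CQbit n x (2 * i) = false) :
    CQcross n x x :=
  ⟨fun _ => rfl, fun i hi => pairRel_self_iff.2 (hx i (by omega))⟩

/-- The pairs pin down the bits below `2⌊n/2⌋` and, for odd `n`, condition (i) the top one. -/
lemma CQcross_zero_left_iff {y : CQVertex n} : CQcross n (zero n) y ↔ y = zero n := by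
  refine ⟨fun ⟨hlast, hpairs⟩ => ext_bit fun i hi => ?_, ?_⟩
  · rw [bit_zero]
    by_cases h : i / 2 < n / 2
    · have := pairRel_false_false_iff.1 (by simpa using hpairs (i / 2) h)
      rcases Nat.even_or_odd' i with ⟨t, rfl | rfl⟩
      · simpa using this.2
      · simpa [show (2 * t + 1) / 2 = t by omega] using this.1
    · obtain rfl : i = n - 1 := by omega
      simpa using (hlast (by omega)).symm
  · rintro rfl
    exact CQcross_self fun _ _ => bit_zero _ _

lemma CQrel_symm : ∀ {n : ℕ} {x y : CQVertex n}, CQrel n x y → CQrel n y x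
  | 0, _, _, h => h
  | n + 1, (a, x), (b, y), h => by
    change CQrel (n + 1) (cons a x) (cons b y) at h
    rcases CQrel_succ.1 h with ⟨hab, h⟩ | ⟨hab, h⟩
    · exact CQrel_succ.2 (Or.inl ⟨hab.symm, CQrel_symm h⟩)
    · exact CQrel_succ.2 (Or.inr ⟨hab.symm, CQcross_symm h⟩)

lemma crossedCube_adj_iff {x y : CQVertex n} :
    (crossedCube n).Adj x y ↔ x ≠ y ∧ CQrel n x y := by
  rw [crossedCube, fromRel_adj]
  exact and_congr_right fun _ => ⟨fun h => h.elim id CQrel_symm, Or.inl⟩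

lemma CQrel_zero_left_iff {y : CQVertex n} : CQrel n (zero n) y ↔ ∃ j < n, y = unit n j := by
  induction n with
  | zero => simp [CQrel]
  | succ n ih =>
    obtain ⟨b, y⟩ := y
    change CQrel (n + 1) (cons false (zero n)) (cons b y) ↔ ∃ j < n + 1, cons b y = _
    rw [CQrel_succ, ih, CQcross_zero_left_iff]
    constructor
    · rintro (⟨rfl, j, hj, rfl⟩ | ⟨hb, rfl⟩)
      · exact ⟨j, by omega, (unit_succ_of_ne hj.ne).symm⟩
      · obtain rfl : b = true := by simpa using hb.symm
        exact ⟨n, by omega, unit_succ_self.symm⟩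
    · rintro ⟨j, hj, hy⟩
      rcases eq_or_ne j n with rfl | hjn
      · obtain ⟨rfl, rfl⟩ := cons_inj.1 (hy.trans unit_succ_self)
        exact Or.inr ⟨Bool.false_ne_true, rfl⟩
      · obtain ⟨rfl, rfl⟩ := cons_inj.1 (hy.trans (unit_succ_of_ne hjn))
        exact Or.inl ⟨rfl, j, by omega, rfl⟩

lemma crossedCube_adj_cons_zero_iff {a b : Bool} {y : CQVertex n} :
    (crossedCube (n + 1)).Adj (cons a (zero n)) (cons b y) ↔
      (b = a ∧ ∃ j < n, y = unit n j) ∨ (b ≠ a ∧ y = zero n) := by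
  rw [crossedCube_adj_iff, CQrel_succ, CQrel_zero_left_iff, CQcross_zero_left_iff]
  constructor
  · rintro ⟨-, ⟨rfl, h⟩ | ⟨hab, rfl⟩⟩
    exacts [Or.inl ⟨rfl, h⟩, Or.inr ⟨hab.symm, rfl⟩]
  · rintro (⟨rfl, j, hj, rfl⟩ | ⟨hab, rfl⟩)
    · exact ⟨fun h => unit_ne_zero hj (cons_inj.1 h).2.symm, Or.inl ⟨rfl, j, hj, rfl⟩⟩
    · exact ⟨fun h => hab (cons_inj.1 h).1.symm, Or.inr ⟨hab.symm, rfl⟩⟩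

lemma crossedCube_adj_cons_self {a b : Bool} (hab : a ≠ b) {x : CQVertex n}
    (hx : ∀ i, 2 * i + 1 < n → CQbit n x (2 * i) = false) :
    (crossedCube (n + 1)).Adj (cons a x) (cons b x) :=
  crossedCube_adj_iff.2 ⟨fun h => hab (cons_inj.1 h).1, Or.inr ⟨hab, CQcross_self hx⟩⟩

end CrossedCube

namespace BCDC

variable {N : ℕ}

lemma adj_cons_zero_cons_unit (a : Bool) {j : ℕ} (hj : j < N) :
    (crossedCube (N + 1)).Adj (cons a (zero N)) (cons a (unit N j)) :=
  crossedCube_adj_cons_zero_iff.2 (Or.inl ⟨rfl, j, hj, rfl⟩)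

lemma adj_cons_zero : (crossedCube (N + 1)).Adj (cons false (zero N)) (cons true (zero N)) :=
  crossedCube_adj_cons_zero_iff.2 (Or.inr ⟨by decide, rfl⟩)

lemma adj_cons_unit {j : ℕ} (hj : j < N) (hj' : j % 2 = 1 ∨ j + 1 = N) :
    (crossedCube (N + 1)).Adj (cons false (unit N j)) (cons true (unit N j)) :=
  crossedCube_adj_cons_self (by decide) fun i hi => by
    rw [bit_unit hj, decide_eq_false_iff_not]
    omega

lemma eq_of_adj_cons_zero {a : Bool} {y : CQVertex (N + 1)}
    (h : (crossedCube (N + 1)).Adj (cons a (zero N)) y) :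
    (∃ j < N, y = cons a (unit N j)) ∨ y = cons (!a) (zero N) := by
  obtain ⟨b, y⟩ := y
  change (crossedCube (N + 1)).Adj _ (cons b y) at h
  rcases crossedCube_adj_cons_zero_iff.1 h with ⟨rfl, j, hj, rfl⟩ | ⟨hb, rfl⟩
  · exact Or.inl ⟨j, hj, rfl⟩
  · exact Or.inr (cons_inj.2 ⟨by cases a <;> cases b <;> simp_all, rfl⟩)

/-- The neighbours of `0^{N+1} ∼ 10^N` in `B_{N+1}` in path order: the star at `0^{N+1}`, the
joining edge `0e_{N-1} ∼ 1e_{N-1}` at position `N`, then the star at `10^N` backwards. -/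
def chain (N i : ℕ) : Sym2 (CQVertex (N + 1)) :=
  if i < N then s(cons false (zero N), cons false (unit N i))
  else if i = N then s(cons false (unit N (N - 1)), cons true (unit N (N - 1)))
  else s(cons true (zero N), cons true (unit N (2 * N - i)))

lemma chain_mem_edgeSet (hN : 0 < N) (i : ℕ) : chain N i ∈ (crossedCube (N + 1)).edgeSet := by
  unfold chain
  split_ifs with h
  · exact adj_cons_zero_cons_unit false h
  · exact adj_cons_unit (by omega) (Or.inr (by omega))
  · exact adj_cons_zero_cons_unit true (by omega)

lemma chain_injOn {i j : ℕ} (hi : i < 2 * N + 1) (hj : j < 2 * N + 1)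
    (h : chain N i = chain N j) : i = j := by
  unfold chain at h
  split_ifs at h <;> simp at h <;> try omega
  all_goals rcases h with h | ⟨-, h⟩
  all_goals first
    | exact absurd h (unit_ne_zero (by omega))
    | have := (unit_inj (by omega) (by omega)).1 h
      omega

lemma chain_succ_inter {i : ℕ} (hi : i + 1 < 2 * N + 1) :
    ∃ v, v ∈ chain N i ∧ v ∈ chain N (i + 1) := by
  unfold chain
  split_ifs <;> try omega
  · exact ⟨_, Sym2.mem_mk_left _ _, Sym2.mem_mk_left _ _⟩
  · obtain rfl : i = N - 1 := by omega
    exact ⟨_, Sym2.mem_mk_right _ _, Sym2.mem_mk_left _ _⟩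
  · obtain rfl : i = N := by omega
    refine ⟨_, Sym2.mem_mk_right _ _, ?_⟩
    rw [show 2 * i - (i + 1) = i - 1 by omega]
    exact Sym2.mem_mk_right _ _
  · exact ⟨_, Sym2.mem_mk_left _ _, Sym2.mem_mk_left _ _⟩

def chainCopy (hN : 0 < N) : Copy (pathGraph (2 * N + 1)) (BCDC (N + 1)) :=
  Copy.ofPathGraph (fun i => ⟨chain N i, chain_mem_edgeSet hN i⟩)
    (fun i j h => Fin.ext (chain_injOn i.isLt j.isLt (congrArg Subtype.val h)))
    fun i j hij => lineGraph_adj_iff_exists.2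
      ⟨fun h => by have := chain_injOn i.isLt j.isLt (congrArg Subtype.val h); omega,
        hij ▸ chain_succ_inter (hij ▸ j.isLt)⟩

lemma chainCopy_apply (hN : 0 < N) (i : Fin (2 * N + 1)) :
    (chainCopy hN i : Sym2 (CQVertex (N + 1))) = chain N i :=
  rfl

def isolatedEdge (N : ℕ) : (crossedCube (N + 1)).edgeSet :=
  ⟨s(cons false (zero N), cons true (zero N)), adj_cons_zero⟩

def survivingEdge (hN : 1 < N) : (crossedCube (N + 1)).edgeSet :=
  ⟨s(cons false (unit N 1), cons true (unit N 1)), adj_cons_unit hN (Or.inl rfl)⟩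

lemma isolatedEdge_ne_survivingEdge (hN : 1 < N) : isolatedEdge N ≠ survivingEdge hN := by
  rw [Ne, Subtype.ext_iff]
  simp [isolatedEdge, survivingEdge, (unit_ne_zero hN).symm]

lemma isolatedEdge_notMem_range (hN : 0 < N) : isolatedEdge N ∉ Set.range (chainCopy hN) := by
  rintro ⟨i, hi⟩
  have h := congrArg Subtype.val hi
  simp only [chainCopy_apply, chain, isolatedEdge] at h
  split_ifs at h <;> simp at h
  exact unit_ne_zero (by omega) h

lemma survivingEdge_notMem_range (hN : 2 < N) :
    survivingEdge (by omega : 1 < N) ∉ Set.range (chainCopy (by omega : 0 < N)) := by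
  rintro ⟨i, hi⟩
  have h := congrArg Subtype.val hi
  simp only [chainCopy_apply, chain, survivingEdge] at h
  split_ifs at h <;> simp at h
  have := (unit_inj (by omega) (by omega)).1 h
  omega

lemma exists_chainCopy_eq_of_adj (hN : 0 < N) {x : (crossedCube (N + 1)).edgeSet}
    (hx : (BCDC (N + 1)).Adj (isolatedEdge N) x) :
    ∃ i : Fin (2 * N + 1), i.val ≠ N ∧ chainCopy hN i = x := by
  obtain ⟨hne, v, hv, hvx⟩ := lineGraph_adj_iff_exists.1 hx
  obtain ⟨y, hy⟩ := Sym2.mem_iff_exists.1 hvx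
  have hadj : (crossedCube (N + 1)).Adj v y := by
    have hx' := x.property
    rwa [hy, mem_edgeSet] at hx'
  have hx_ne : x.val ≠ s(cons false (zero N), cons true (zero N)) :=
    fun h => hne (Subtype.ext h.symm)
  rcases Sym2.mem_iff.1 hv with rfl | rfl
  · rcases eq_of_adj_cons_zero hadj with ⟨j, hj, rfl⟩ | rfl
    · exact ⟨⟨j, by omega⟩, hj.ne, Subtype.ext (by simp [chainCopy_apply, chain, hj, hy])⟩
    · exact absurd hy hx_ne
  · rcases eq_of_adj_cons_zero hadj with ⟨j, hj, rfl⟩ | rfl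
    · refine ⟨⟨2 * N - j, by omega⟩, by simp; omega, Subtype.ext ?_⟩
      change chain N (2 * N - j) = _
      rw [chain, if_neg (by omega), if_neg (by omega), hy, show 2 * N - (2 * N - j) = j by omega]
    · exact absurd (hy.trans Sym2.eq_swap) hx_ne

lemma structConn_le_of_chainCopy_cover (hN : 2 < N) {k : ℕ} {ι : Type*} [Fintype ι]
    (d : ι → Copy (pathGraph k) (BCDC (N + 1)))
    (hsub : ∀ t, Set.range (d t) ⊆ Set.range (chainCopy (by omega : 0 < N)))
    (hcov : ∀ i : Fin (2 * N + 1), i.val ≠ N → ∃ t, chainCopy (by omega) i ∈ Set.range (d t)) :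
    (BCDC (N + 1)).structConn (pathGraph k) ≤ Fintype.card ι := by
  refine structConn_le_card_of_neighborSet_subset d (isolatedEdge_ne_survivingEdge (by omega))
    (fun t h => isolatedEdge_notMem_range _ (hsub t h))
    (fun t h => survivingEdge_notMem_range hN (hsub t h)) fun x hx => ?_
  obtain ⟨i, hi, rfl⟩ := exists_chainCopy_eq_of_adj (by omega) hx
  exact Set.mem_iUnion.2 (hcov i hi)

end BCDC

open BCDC in
/-- For `n ≥ 4` and `4 ≤ k ≤ 2n - 1`:
`κ(B_n; P_k) ≤ (2n-2)/k` if `4 ≤ k ≤ n - 1` and `k ∣ n - 1`, and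
`κ(B_n; P_k) ≤ ⌈(2n-1)/k⌉` otherwise. -/
theorem bcdc_path_structConn_upper (n k : ℕ) (hn : 4 ≤ n) (hk1 : 4 ≤ k)
    (hk2 : k ≤ 2 * n - 1) :
    (k ≤ n - 1 ∧ k ∣ n - 1 →
      (BCDC n).structConn (SimpleGraph.pathGraph k) ≤ (2 * n - 2) / k) ∧
    (¬ (k ≤ n - 1 ∧ k ∣ n - 1) →
      (BCDC n).structConn (SimpleGraph.pathGraph k) ≤ (2 * n - 1 + (k - 1)) / k) := by
  obtain ⟨N, rfl⟩ : ∃ N, n = N + 1 := ⟨n - 1, by omega⟩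
  have hN : 2 < N := by omega
  have hk : 0 < k := by omega
  refine ⟨fun ⟨hkN, q, hq⟩ => ?_, fun _ => ?_⟩
  · obtain ⟨d, hsub, hcov⟩ :=
      (chainCopy (by omega : 0 < N)).exists_pathGraph_cover_of_ne_middle hk (by omega)
    obtain rfl : N = k * q := by omega
    calc _ ≤ _ := structConn_le_of_chainCopy_cover hN d hsub hcov
      _ = q + q := by rw [Fintype.card_sum, Fintype.card_fin, ← smul_eq_mul, smul_ceilDiv hk]
      _ = _ := by
        rw [show 2 * (k * q + 1) - 2 = k * (q + q) by rw [Nat.mul_add k]; omega,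
          Nat.mul_div_cancel_left _ hk]
  · obtain ⟨d, hsub, hcov⟩ := (chainCopy (by omega : 0 < N)).exists_pathGraph_cover hk (by omega)
    calc _ ≤ _ := structConn_le_of_chainCopy_cover hN d hsub fun i _ => hcov i
      _ = _ := by rw [Fintype.card_fin, Nat.ceilDiv_eq_add_pred_div]; congr 1; omega
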